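/- Let λ ∈ Γ_k with entries ordered λ_1 ≥ λ_2 ≥ ... ≥ λ_n. Then λ_1 σ_{k-1}(λ|1) ≥ (k/n) σ_k(λ). -/

import Mathlib

open Finset

/-- The k-th elementary symmetric polynomial of λ ∈ ℝⁿ. -/
noncomputable def esymm (n k : ℕ) (lam : Fin n → ℝ) : ℝ :=
  ∑ s ∈ Finset.powersetCard k (Finset.univ : Finset (Fin n)), ∏ i ∈ s, lam i

/-- The Garding cone Γ_k. -/
def GammaCone (n k : ℕ) : Set (Fin n → ℝ) :=
  {lam | ∀ j, 1 ≤ j → j ≤ k → 0 < esymm n j lam}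

/-!
Write `μ = λ|1` and split `σ_k(λ) = λ_1 σ_{k-1}(μ) + σ_k(μ)`; the claim becomes
`k σ_k(μ) ≤ (n - k) λ_1 σ_{k-1}(μ)`, which is trivial when `σ_k(μ) ≤ 0`. Otherwise `μ ∈ Γ_k`, so all
`σ_{k-1}(μ|i)` are positive, and the identities `∑ μ_i σ_{k-1}(μ|i) = k σ_k(μ)` and
`∑ σ_{k-1}(μ|i) = (n - k + 1) σ_{k-1}(μ)` together with `μ_i ≤ λ_1` give the bound; the term
`i = 1`, where `μ_1 = 0`, accounts for the missing `σ_{k-1}(μ)`.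

Positivity of `σ_{k-1}(λ|i)` on `Γ_k` follows by induction on `k` from the Newton-type inequality
`(n - j) σ_j σ_{j+2} ≤ (n - j - 1) σ_{j+1}²`, valid for every real vector: by Rolle the
`(n - j - 2)`-nd derivative of `∏ (X + λ_i)` is real-rooted, and a real-rooted polynomial satisfies
`2 a_0 a_2 ≤ a_1²`, since by Vieta this reads `e_{m+1}² - 2 e_m e_{m+2} = ∑_i ∏_{l ≠ i} r_l² ≥ 0`
for its `m + 2` roots `r`.
-/

namespace Multiset

variable {R : Type*}

theorem esymm_cons_succ [CommSemiring R] (a : R) (s : Multiset R) (m : ℕ) :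
    (a ::ₘ s).esymm (m + 1) = s.esymm (m + 1) + a * s.esymm m := by
  simp only [esymm, powersetCard_cons, map_add, sum_add, map_map, Function.comp_def, prod_cons,
    sum_map_mul_left]

theorem esymm_eq_zero_of_card_lt [CommSemiring R] {s : Multiset R} {m : ℕ} (h : card s < m) :
    s.esymm m = 0 := by
  simp [esymm, powersetCard_eq_empty m h]

theorem esymm_zero_cons [CommSemiring R] (s : Multiset R) (m : ℕ) :
    (0 ::ₘ s).esymm m = s.esymm m := by
  cases m with
  | zero => simp [esymm, powersetCard_zero_left]
  | succ m => rw [esymm_cons_succ, zero_mul, add_zero]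

theorem two_mul_esymm_mul_esymm_le_sq [CommRing R] [LinearOrder R] [IsStrictOrderedRing R]
    {m : ℕ} {s : Multiset R} (hs : card s = m + 2) :
    2 * (s.esymm (m + 2) * s.esymm m) ≤ s.esymm (m + 1) ^ 2 := by
  induction m generalizing s with
  | zero =>
    obtain ⟨a, b, rfl⟩ := card_eq_two.mp hs
    have h0 : (a ::ₘ {b}).esymm 0 = 1 := by simp [esymm, powersetCard_zero_left]
    simp only [zero_add, insert_eq_cons, esymm_pair_one, esymm_pair_two, h0]
    nlinarith [sq_nonneg a, sq_nonneg b]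
  | succ m ih =>
    obtain ⟨a, ha⟩ := card_pos_iff_exists_mem.mp (show 0 < card s by omega)
    obtain ⟨t, rfl⟩ := exists_cons_of_mem ha
    have ht : card t = m + 2 := by simpa using hs
    have htop : t.esymm (m + 3) = 0 := esymm_eq_zero_of_card_lt (by omega)
    rw [esymm_cons_succ, esymm_cons_succ, esymm_cons_succ, htop]
    nlinarith [sq_nonneg (t.esymm (m + 2)), mul_nonneg (sq_nonneg a) (sub_nonneg.2 (ih ht))]

end Multiset

namespace Polynomial

theorem Splits.derivative_of_real {p : ℝ[X]} (hp : p.Splits) : (derivative p).Splits := by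
  rw [splits_iff_card_roots] at hp ⊢
  have := card_roots_le_derivative p
  have := card_roots' (derivative p)
  have := natDegree_derivative_le p
  omega

theorem Splits.iterate_derivative_of_real {p : ℝ[X]} (hp : p.Splits) (m : ℕ) :
    (derivative^[m] p).Splits := by
  induction m with
  | zero => exact hp
  | succ m ih => rw [Function.iterate_succ_apply']; exact ih.derivative_of_real

theorem Splits.two_mul_coeff_zero_mul_coeff_two_le_sq {K : Type*} [Field K] [LinearOrder K]
    [IsStrictOrderedRing K] {p : K[X]} (hp : p.Splits) (hdeg : 2 ≤ p.natDegree) :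
    2 * (p.coeff 0 * p.coeff 2) ≤ p.coeff 1 ^ 2 := by
  obtain ⟨m, hm⟩ := Nat.exists_eq_add_of_le' hdeg
  have hcard : Multiset.card p.roots = m + 2 := (splits_iff_card_roots.mp hp).trans hm
  have hvieta (k : ℕ) (hk : k ≤ 2) := coeff_eq_esymm_roots_of_splits hp (k := k) (by omega)
  rw [hvieta 0 (by omega), hvieta 1 (by omega), hvieta 2 (by omega), hm, Nat.sub_zero,
    show m + 2 - 1 = m + 1 by omega, Nat.add_sub_cancel, pow_succ _ (m + 1), pow_succ _ m]
  have hsign : ((-1 : K) ^ m) ^ 2 = 1 := by rw [← pow_mul, pow_mul', neg_one_sq, one_pow]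
  have hroots := Multiset.two_mul_esymm_mul_esymm_le_sq hcard
  nlinarith [mul_le_mul_of_nonneg_left hroots (sq_nonneg p.leadingCoeff)]

end Polynomial

theorem map_univ_val_eq_cons_erase {ι α : Type*} [Fintype ι] [DecidableEq ι] (f : ι → α)
    (i : ι) : univ.val.map f = f i ::ₘ (univ.val.erase i).map f := by
  rw [← Multiset.map_cons, Multiset.cons_erase (mem_univ_val i)]

section ElementarySymmetric

variable {n : ℕ}

theorem esymm_eq_multiset_esymm (g : Fin n → ℝ) (m : ℕ) :
    esymm n m g = (univ.val.map g).esymm m :=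
  (esymm_map_val g univ m).symm

theorem esymm_zero (g : Fin n → ℝ) : esymm n 0 g = 1 := by
  simp [esymm]

theorem esymm_one (g : Fin n → ℝ) : esymm n 1 g = ∑ i, g i := by
  simp [esymm, powersetCard_one]

theorem esymm_update_zero (g : Fin n → ℝ) (i : Fin n) (m : ℕ) :
    esymm n m (Function.update g i 0) = ((univ.val.erase i).map g).esymm m := by
  rw [esymm_eq_multiset_esymm, map_univ_val_eq_cons_erase _ i, Function.update_self,
    Multiset.esymm_zero_cons]
  congr 1
  refine Multiset.map_congr rfl fun x hx => Function.update_of_ne ?_ 0 g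
  exact ((Multiset.Nodup.mem_erase_iff univ.nodup).mp hx).1

theorem esymm_succ_eq_mul_add (g : Fin n → ℝ) (i : Fin n) (m : ℕ) :
    esymm n (m + 1) g =
      g i * esymm n m (Function.update g i 0) + esymm n (m + 1) (Function.update g i 0) := by
  rw [esymm_eq_multiset_esymm, map_univ_val_eq_cons_erase g i, Multiset.esymm_cons_succ,
    esymm_update_zero, esymm_update_zero, add_comm]

theorem sum_esymm_update_zero (g : Fin n → ℝ) (m : ℕ) :
    ∑ i, esymm n m (Function.update g i 0) = ((n : ℝ) - m) * esymm n m g := by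
  have hprod (i : Fin n) (s : Finset (Fin n)) :
      ∏ x ∈ s, Function.update g i 0 x = if i ∈ s then 0 else ∏ x ∈ s, g x := by
    split_ifs with h
    · rw [prod_update_of_mem h, zero_mul]
    · exact prod_update_of_notMem h g 0
  simp only [esymm, hprod]
  rw [sum_comm, mul_sum]
  refine sum_congr rfl fun s hs => ?_
  obtain ⟨-, hcard⟩ := mem_powersetCard.mp hs
  have hsn : m ≤ n := hcard ▸ card_le_univ s |>.trans_eq (Fintype.card_fin n)
  rw [sum_ite, sum_const_zero, zero_add, sum_const, nsmul_eq_mul, filter_notMem_eq_sdiff,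
    card_univ_sdiff, Fintype.card_fin, hcard, Nat.cast_sub hsn]

theorem sum_mul_esymm_update_zero (g : Fin n → ℝ) (m : ℕ) :
    ∑ i, g i * esymm n m (Function.update g i 0) = ((m : ℝ) + 1) * esymm n (m + 1) g := by
  calc ∑ i, g i * esymm n m (Function.update g i 0)
      = ∑ i, (esymm n (m + 1) g - esymm n (m + 1) (Function.update g i 0)) :=
        sum_congr rfl fun i _ => by rw [esymm_succ_eq_mul_add g i m]; ring
    _ = ((m : ℝ) + 1) * esymm n (m + 1) g := by
        rw [sum_sub_distrib, sum_esymm_update_zero, sum_const, card_univ, Fintype.card_fin,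
          nsmul_eq_mul]
        push_cast
        ring

open Polynomial in
theorem esymm_mul_esymm_le (g : Fin n → ℝ) {j : ℕ} (hj : j + 2 ≤ n) :
    ((n : ℝ) - j) * (esymm n j g * esymm n (j + 2) g) ≤
      ((n : ℝ) - j - 1) * esymm n (j + 1) g ^ 2 := by
  set P : ℝ[X] := ∏ i, (X + C (g i))
  have hP : P.Splits := Splits.prod fun i _ => Splits.X_add_C (g i)
  obtain ⟨d, rfl⟩ := Nat.exists_eq_add_of_le hj
  have hR (m : ℕ) (hm : m ≤ j + 2) : (derivative^[d] P).coeff m =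
      ((d + m).descFactorial d : ℝ) * esymm (j + 2 + d) (j + 2 - m) g := by
    rw [coeff_iterate_derivative, nsmul_eq_mul, Finset.prod_X_add_C_coeff _ _ (by simp; omega),
      card_univ, Fintype.card_fin, show j + 2 + d - (m + d) = j + 2 - m by omega, add_comm m]
    rfl
  have hdeg : 2 ≤ (derivative^[d] P).natDegree := by
    refine le_trans (by omega) (le_natDegree_of_ne_zero (n := j + 2) ?_)
    rw [hR _ le_rfl, Nat.sub_self, esymm_zero, mul_one, Nat.cast_ne_zero]
    exact (Nat.descFactorial_pos.mpr (by omega)).ne'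
  have key := (hP.iterate_derivative_of_real d).two_mul_coeff_zero_mul_coeff_two_le_sq hdeg
  rw [hR 0 (by omega), hR 1 (by omega), hR 2 (by omega), add_zero, Nat.descFactorial_self,
    Nat.sub_zero, show j + 2 - 1 = j + 1 by omega, Nat.add_sub_cancel] at key
  have h1 : (d + 1).descFactorial d = (d + 1) * d.factorial := by
    simpa [Nat.descFactorial_self] using Nat.succ_descFactorial d d
  have h2 : 2 * (d + 2).descFactorial d = (d + 2) * (d + 1).descFactorial d := by
    simpa [show d + 1 + 1 - d = 2 by omega] using Nat.succ_descFactorial (d + 1) d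
  rw [h1] at key h2
  replace h2 := congrArg (Nat.cast (R := ℝ)) h2
  have hpos : (0 : ℝ) < (d.factorial : ℝ) ^ 2 * (d + 1) := by positivity
  refine le_of_mul_le_mul_left ?_ hpos
  push_cast at key h2 ⊢
  linear_combination key - ((d.factorial : ℝ) * esymm _ (j + 2) g * esymm _ j g) * h2

end ElementarySymmetric

section GammaCone

variable {n : ℕ} {lam : Fin n → ℝ}

theorem gammaCone_antitone : Antitone (GammaCone n) :=
  fun _ _ h _ hlam j hj1 hjk => hlam j hj1 (hjk.trans h)

theorem pos_of_mem_gammaCone_of_forall_le {k : ℕ} (hlam : lam ∈ GammaCone n k) (hk : 1 ≤ k)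
    {i : Fin n} (hmax : ∀ x, lam x ≤ lam i) : 0 < lam i := by
  have hsum : ∑ _x : Fin n, (0 : ℝ) < ∑ x, lam x := by
    rw [sum_const_zero, ← esymm_one]
    exact hlam 1 le_rfl hk
  obtain ⟨x, -, hx⟩ := exists_lt_of_sum_lt hsum
  exact hx.trans_le (hmax x)

theorem esymm_update_zero_pos {j : ℕ} (hlam : lam ∈ GammaCone n (j + 1)) (hjn : j + 1 ≤ n)
    (i : Fin n) : 0 < esymm n j (Function.update lam i 0) := by
  induction j with
  | zero => simp [esymm_zero]
  | succ j ih =>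
    set μ := Function.update lam i 0
    have ha : 0 < esymm n j μ :=
      ih (gammaCone_antitone (by omega) hlam) (by omega)
    have hσ1 : 0 < lam i * esymm n j μ + esymm n (j + 1) μ :=
      esymm_succ_eq_mul_add lam i j ▸ hlam (j + 1) (by omega) (by omega)
    have hσ2 : 0 < lam i * esymm n (j + 1) μ + esymm n (j + 2) μ :=
      esymm_succ_eq_mul_add lam i (j + 1) ▸ hlam (j + 2) (by omega) le_rfl
    have hnewton := esymm_mul_esymm_le μ (j := j) (by omega)
    have hnj : (1 : ℝ) ≤ (n : ℝ) - j := by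
      rw [le_sub_iff_add_le]; exact_mod_cast (by omega : 1 + j ≤ n)
    by_contra! hb
    have hsq : esymm n (j + 1) μ ^ 2 < esymm n j μ * esymm n (j + 2) μ := by
      nlinarith [mul_pos ha hσ2, mul_nonneg (neg_nonneg.2 hb) hσ1.le]
    nlinarith [mul_lt_mul_of_pos_left hsq (by linarith : (0 : ℝ) < n - j)]

theorem update_zero_mem_gammaCone {k : ℕ} (hlam : lam ∈ GammaCone n (k + 1)) (hkn : k + 1 ≤ n)
    (i : Fin n) : Function.update lam i 0 ∈ GammaCone n k := fun j _ hjk =>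
  esymm_update_zero_pos (gammaCone_antitone (by omega) hlam) (by omega) i

theorem mul_esymm_update_zero_le {j : ℕ} (hlam : lam ∈ GammaCone n (j + 1)) (hjn : j + 1 ≤ n)
    {i : Fin n} (hmax : ∀ x, lam x ≤ lam i) :
    ((j : ℝ) + 1) * esymm n (j + 1) (Function.update lam i 0) ≤
      ((n : ℝ) - (j + 1)) * lam i * esymm n j (Function.update lam i 0) := by
  set μ := Function.update lam i 0
  have hi : 0 < lam i := pos_of_mem_gammaCone_of_forall_le hlam (by omega) hmax
  have ha : 0 < esymm n j μ := esymm_update_zero_pos hlam hjn i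
  have hnj : (0 : ℝ) ≤ (n : ℝ) - (j + 1) := by
    rw [sub_nonneg]; exact_mod_cast hjn
  rcases le_or_gt (esymm n (j + 1) μ) 0 with hc | hc
  · nlinarith [mul_nonneg (mul_nonneg hnj hi.le) ha.le]
  have hμ : μ ∈ GammaCone n (j + 1) := fun m hm1 hm => by
    rcases hm.lt_or_eq with hm | rfl
    · exact update_zero_mem_gammaCone hlam hjn i m hm1 (by omega)
    · exact hc
  have hμ_le (x : Fin n) : μ x ≤ lam i := by
    rcases eq_or_ne x i with rfl | hx
    · simpa [μ] using hi.le
    · simpa [μ, Function.update_of_ne hx] using hmax x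
  have hterm (x : Fin n) : 0 ≤ (lam i - μ x) * esymm n j (Function.update μ x 0) :=
    mul_nonneg (sub_nonneg.2 (hμ_le x)) (esymm_update_zero_pos hμ hjn x).le
  have hsingle := single_le_sum (fun x _ => hterm x) (mem_univ i)
  simp only [μ, Function.update_self, Function.update_idem, sub_zero] at hsingle
  simp only [sub_mul, sum_sub_distrib, ← mul_sum, sum_esymm_update_zero,
    sum_mul_esymm_update_zero] at hsingle
  linarith

end GammaCone

/-- For λ ∈ Γ_k ordered decreasingly, λ_1 σ_{k-1}(λ|1) ≥ (k/n) σ_k(λ). -/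
theorem largest_entry_bound (n k : ℕ) (hk1 : 1 ≤ k) (hkn : k ≤ n)
    (lam : Fin n → ℝ) (hlam : lam ∈ GammaCone n k) (hsort : Antitone lam) :
    (k : ℝ) / (n : ℝ) * esymm n k lam ≤
      lam ⟨0, by omega⟩ *
        esymm n (k - 1) (Function.update lam ⟨0, by omega⟩ 0) := by
  obtain ⟨j, rfl⟩ := Nat.exists_eq_add_of_le' hk1
  set i : Fin n := ⟨0, by omega⟩
  have hmax (x : Fin n) : lam x ≤ lam i := hsort (Nat.zero_le x.val)
  have hbound := mul_esymm_update_zero_le hlam hkn hmax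
  have hnpos : (0 : ℝ) < n := by exact_mod_cast (by omega : 0 < n)
  rw [Nat.add_sub_cancel, esymm_succ_eq_mul_add lam i j, div_mul_eq_mul_div, div_le_iff₀ hnpos]
  push_cast
  linarith
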